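/- In the forgetting process, the expected size of the memory after n steps is at least (n+1)/4. Formally, starting with S = {0} and inserting n i.i.d. uniform [0,1] points where each insertion removes the current minimum of S if the new point exceeds it, the expectation of |S| after n insertions is at least (n+1)/4. -/

import Mathlib

open MeasureTheory ProbabilityTheory Finset

noncomputable section

/-- One step of the forgetting process: the new point `x` joins `S`; if `x` is strictly
larger than the current minimum of `S`, that minimum is removed. -/
def forgetStep (S : Finset ℝ) (x : ℝ) : Finset ℝ :=
  if h : S.Nonempty then
    if S.min' h < x then insert x (S.erase (S.min' h)) else insert x S
  else insert x S

/-- The memory after `n` steps, starting from the set `T`, with inputs `xs 0, xs 1, …`. -/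
def forgetMem (T : Finset ℝ) (xs : ℕ → ℝ) : ℕ → Finset ℝ
  | 0 => T
  | n + 1 => forgetStep (forgetMem T xs n) (xs n)

/-- `sCount xs x ℓ` : number of elements of the memory lying in `[0, x]` after `ℓ` steps,
starting from `S = {0}`. -/
def sCount (xs : ℕ → ℝ) (x : ℝ) (ℓ : ℕ) : ℕ :=
  ((forgetMem {0} xs ℓ).filter (· ≤ x)).card

/-- The branching weight `W(z,n) = Σ_{x ∈ S(z,n)} 1/(1-x)`, the sum over memory elements
strictly below `z` at time `n`. -/
def Wproc (xs : ℕ → ℝ) (z : ℝ) (n : ℕ) : ℝ :=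
  ∑ x ∈ (forgetMem {0} xs n).filter (· < z), 1 / (1 - x)

/-- `Z(z,n) = Σ_{k=1}^n W(z,k)·1{W(z,k-1)=0}`. -/
def Zproc (xs : ℕ → ℝ) (z : ℝ) (n : ℕ) : ℝ :=
  ∑ k ∈ Finset.range n, if Wproc xs z k = 0 then Wproc xs z (k + 1) else 0

/-- `X(z,n) = W(z,n) - Z(z,n)`. -/
def Xproc (xs : ℕ → ℝ) (z : ℝ) (n : ℕ) : ℝ :=
  Wproc xs z n - Zproc xs z n

/-- the minimum of the memory at time `n` (with junk value `0` if the memory were empty). -/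
def mminProc (xs : ℕ → ℝ) (n : ℕ) : ℝ :=
  (forgetMem {0} xs n).min.untopD 0

/-- the critical point `z₀ = 1 - 1/e`. -/
def critPoint : ℝ := 1 - (Real.exp 1)⁻¹

/-- The σ-algebra generated by the first `n` inputs `X 0, …, X (n-1)`. -/
def natSigma {Ω : Type*} [MeasurableSpace Ω] (X : ℕ → Ω → ℝ) (n : ℕ) : MeasurableSpace Ω :=
  ⨆ i ∈ Finset.range n, MeasurableSpace.comap (X i) inferInstance

/-- The natural filtration `F_n = σ(x_1, …, x_n)` of the input sequence. -/
def natFilt {Ω : Type*} [m0 : MeasurableSpace Ω] (X : ℕ → Ω → ℝ)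
    (hX : ∀ i, Measurable (X i)) : Filtration ℕ m0 where
  seq n := natSigma X n
  mono' n m hnm := biSup_mono fun i hi => Finset.mem_range.2 ((Finset.mem_range.1 hi).trans_le hnm)
  le' n := iSup₂_le fun i _ => measurable_iff_comap_le.1 (hX i)

/-- The input sequence is i.i.d. uniform on `[0,1]`. -/
def IsUnifIID {Ω : Type*} [MeasurableSpace Ω] (μ : Measure Ω) (X : ℕ → Ω → ℝ) : Prop :=
  (∀ i, Measurable (X i)) ∧
    iIndepFun X μ ∧
    ∀ i, Measure.map (X i) μ = volume.restrict (Set.Icc (0 : ℝ) 1)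

end

/-!
Track the potential `Ψ(S) = ∑_{y ∈ S} (1 + y)`. When the new point `x` falls below the current
minimum `m` it adds `1 + x`; otherwise it replaces `m` and adds `x - m`. As `x` is uniform on
`[0,1]` and independent of `m`, the expected increment is `1/2 + m² ≥ 1/2`, so
`𝔼 Ψ(S_n) ≥ 1 + n/2`. All points lie in `[0,1]`, hence `Ψ(S) ≤ 2|S|` and `𝔼|S_n| ≥ (n+2)/4`.
-/

noncomputable section

lemma forgetStep_subset (S : Finset ℝ) (x : ℝ) : forgetStep S x ⊆ insert x S := by
  unfold forgetStep
  split_ifs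
  exacts [insert_subset_insert x (erase_subset _ S), Subset.rfl, Subset.rfl]

lemma forgetStep_nonempty (S : Finset ℝ) (x : ℝ) : (forgetStep S x).Nonempty := by
  unfold forgetStep
  split_ifs <;> exact insert_nonempty _ _

lemma sum_forgetStep {S : Finset ℝ} (hS : S.Nonempty) {x : ℝ} (hx : x ∉ S) (f : ℝ → ℝ) :
    ∑ y ∈ forgetStep S x, f y =
      ∑ y ∈ S, f y + f x - if S.min' hS < x then f (S.min' hS) else 0 := by
  unfold forgetStep
  rw [dif_pos hS]
  split_ifs with hlt
  · rw [sum_insert fun h => hx (mem_of_mem_erase h), sum_erase_eq_sub (min'_mem S hS)]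
    ring
  · rw [sum_insert hx]
    ring

lemma forgetMem_subset (T : Finset ℝ) (xs : ℕ → ℝ) (k : ℕ) :
    forgetMem T xs k ⊆ T ∪ (range k).image xs := by
  induction k with
  | zero => simp [forgetMem]
  | succ k ih =>
    refine (forgetStep_subset _ _).trans (insert_subset ?_ (ih.trans ?_))
    · exact mem_union_right _ (mem_image_of_mem xs (mem_range.2 k.lt_succ_self))
    · exact union_subset_union Subset.rfl (image_subset_image (range_subset_range.2 k.le_succ))

lemma card_forgetMem_le (T : Finset ℝ) (xs : ℕ → ℝ) (k : ℕ) :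
    (forgetMem T xs k).card ≤ T.card + k :=
  (card_le_card (forgetMem_subset T xs k)).trans <|
    (card_union_le _ _).trans (by simpa using card_image_le (s := range k) (f := xs))

lemma forgetMem_nonempty {T : Finset ℝ} (hT : T.Nonempty) (xs : ℕ → ℝ) :
    ∀ k, (forgetMem T xs k).Nonempty
  | 0 => hT
  | _ + 1 => forgetStep_nonempty _ _

lemma forgetMem_congr (T : Finset ℝ) {xs ys : ℕ → ℝ} {k : ℕ} (h : ∀ i < k, xs i = ys i) :
    forgetMem T xs k = forgetMem T ys k := by
  induction k with
  | zero => rfl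
  | succ k ih =>
    simp only [forgetMem]
    rw [ih fun i hi => h i (by omega), h k k.lt_succ_self]

lemma mminProc_eq_min' (xs : ℕ → ℝ) (k : ℕ) :
    mminProc xs k =
      (forgetMem {0} xs k).min' (forgetMem_nonempty (singleton_nonempty 0) xs k) := by
  rw [mminProc, ← coe_min' (forgetMem_nonempty (singleton_nonempty 0) xs k)]
  rfl

lemma forgetMem_subset_Icc {xs : ℕ → ℝ} (hxs : ∀ i, xs i ∈ Set.Icc (0 : ℝ) 1) (k : ℕ) :
    ∀ y ∈ forgetMem {0} xs k, y ∈ Set.Icc (0 : ℝ) 1 := by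
  intro y hy
  rcases mem_union.1 (forgetMem_subset _ _ _ hy) with h | h
  · rw [mem_singleton.1 h]
    exact Set.left_mem_Icc.2 zero_le_one
  · obtain ⟨i, -, rfl⟩ := mem_image.1 h
    exact hxs i

lemma mminProc_mem_Icc {xs : ℕ → ℝ} (hxs : ∀ i, xs i ∈ Set.Icc (0 : ℝ) 1) (k : ℕ) :
    mminProc xs k ∈ Set.Icc (0 : ℝ) 1 := by
  rw [mminProc_eq_min']
  exact forgetMem_subset_Icc hxs k _ (min'_mem _ _)

lemma Measurable.apply_of_countable {β γ κ : Type*} [MeasurableSpace β] [MeasurableSpace γ]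
    [MeasurableSpace κ] [Countable κ] [MeasurableSingletonClass κ] {g : β → κ}
    (hg : Measurable g) {F : κ → β → γ} (hF : ∀ c, Measurable (F c)) :
    Measurable fun b => F (g b) b :=
  (measurable_from_prod_countable_right (f := fun p : κ × β => F p.1 p.2) hF).comp
    (hg.prodMk measurable_id)

lemma Finset.measurable_fun_inf' {ι β : Type*} [MeasurableSpace β] {v : β → ι → ℝ}
    {I : Finset ι} (hI : I.Nonempty) (hv : ∀ i ∈ I, Measurable (v · i)) :
    Measurable fun b => I.inf' hI (v b) := by
  have h : Measurable (I.inf' hI fun i b => v b i) :=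
    Finset.inf'_induction hI _ (p := Measurable) (fun _ hf _ hg => hf.inf hg) hv
  convert h using 1
  exact funext fun b => by rw [Finset.inf'_apply]

lemma min'_image_eq_inf' {ι : Type*} (v : ι → ℝ) {I : Finset ι} (hI : I.Nonempty) :
    (I.image v).min' (hI.image v) = I.inf' hI v := by
  rw [min'_eq_inf', inf'_image]
  rfl

-- The memory is tracked through the set of indices of its points. Erasing every index whose
-- point equals the minimum keeps `image_idxStep` exact even for repeated inputs, and index sets
-- form a countable type, which makes functionals of the memory measurable.
section IndexedMemory

variable {ι : Type*} [DecidableEq ι]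

def idxStep (v : ι → ℝ) (I : Finset ι) (j : ι) : Finset ι :=
  if h : I.Nonempty then
    if I.inf' h v < v j then insert j (I.filter (v · ≠ I.inf' h v)) else insert j I
  else insert j I

lemma image_idxStep (v : ι → ℝ) (I : Finset ι) (j : ι) :
    (idxStep v I j).image v = forgetStep (I.image v) (v j) := by
  unfold idxStep forgetStep
  by_cases h : I.Nonempty
  · rw [dif_pos h, dif_pos (h.image v), min'_image_eq_inf' v h]
    split_ifs
    · rw [image_insert, ← filter_ne', filter_image]
    · rw [image_insert]
  · rw [dif_neg h, dif_neg (by simpa using h), image_insert]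

variable {β : Type*} [MeasurableSpace β] {v : β → ι → ℝ}

lemma measurable_idxStep (hv : ∀ i, Measurable (v · i)) (I : Finset ι) (j : ι) :
    Measurable fun b => idxStep (v b) I j := by
  unfold idxStep
  by_cases h : I.Nonempty
  · simp only [dif_pos h]
    have hmin := Finset.measurable_fun_inf' h fun i _ => hv i
    refine Measurable.ite (measurableSet_lt hmin (hv j)) ?_ measurable_const
    refine measurable_finset_iff.2 fun a => ?_
    simp only [mem_insert, mem_filter]
    exact measurable_const.or
      (measurable_const.and (measurableSet_setOfPred.1 (measurableSet_eq_fun (hv a) hmin)).not)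
  · simp only [dif_neg h]
    exact measurable_const

lemma measurable_sum_image (hv : ∀ i, Measurable (v · i)) (I : Finset ι) {f : ℝ → ℝ}
    (hf : Measurable f) : Measurable fun b => ∑ y ∈ I.image (v b), f y := by
  induction I using Finset.induction_on with
  | empty => simp
  | insert a I _ ih =>
    have hsum : ∀ b, ∑ y ∈ (insert a I).image (v b), f y =
        (if v b a ∈ I.image (v b) then 0 else f (v b a)) + ∑ y ∈ I.image (v b), f y := by
      intro b
      rw [image_insert]
      split_ifs with hmem
      · rw [insert_eq_of_mem hmem, zero_add]
      · rw [sum_insert hmem]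
    have hset : {b | v b a ∈ I.image (v b)} = ⋃ i ∈ I, {b | v b i = v b a} := by
      ext b; simp
    simp_rw [hsum]
    refine Measurable.add (Measurable.ite ?_ measurable_const (hf.comp (hv a))) ih
    rw [hset]
    exact Finset.measurableSet_biUnion I fun i _ => measurableSet_eq_fun (hv i) (hv a)

end IndexedMemory

/-- The point carried by an index: `none` is the initial point `0`, `some i` is the input `xs i`. -/
def idxVal (xs : ℕ → ℝ) (o : Option ℕ) : ℝ := o.elim 0 xs

def idxMem (xs : ℕ → ℝ) : ℕ → Finset (Option ℕ)
  | 0 => {none}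
  | k + 1 => idxStep (idxVal xs) (idxMem xs k) (some k)

lemma forgetMem_eq_image_idxMem (xs : ℕ → ℝ) :
    ∀ k, forgetMem {0} xs k = (idxMem xs k).image (idxVal xs)
  | 0 => by simp [forgetMem, idxMem, idxVal]
  | k + 1 => by
    rw [forgetMem, forgetMem_eq_image_idxMem xs k, idxMem, image_idxStep]
    rfl

lemma measurable_idxVal (o : Option ℕ) : Measurable fun xs : ℕ → ℝ => idxVal xs o := by
  cases o with
  | none => exact measurable_const
  | some i => exact measurable_pi_apply (X := fun _ : ℕ => ℝ) i

lemma measurable_idxMem : ∀ k, Measurable fun xs : ℕ → ℝ => idxMem xs k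
  | 0 => measurable_const
  | k + 1 => (measurable_idxMem k).apply_of_countable fun I =>
      measurable_idxStep measurable_idxVal I (some k)

lemma measurable_sum_forgetMem {f : ℝ → ℝ} (hf : Measurable f) (k : ℕ) :
    Measurable fun xs : ℕ → ℝ => ∑ y ∈ forgetMem {0} xs k, f y := by
  simp_rw [forgetMem_eq_image_idxMem]
  exact (measurable_idxMem k).apply_of_countable fun I =>
    measurable_sum_image measurable_idxVal I hf

lemma measurable_mminProc (k : ℕ) : Measurable fun xs : ℕ → ℝ => mminProc xs k := by
  simp_rw [mminProc, forgetMem_eq_image_idxMem]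
  refine (measurable_idxMem k).apply_of_countable
    (F := fun I xs => (I.image (idxVal xs)).min.untopD 0) fun I => ?_
  by_cases hI : I.Nonempty
  · have h : ∀ xs, (I.image (idxVal xs)).min.untopD 0 = I.inf' hI (idxVal xs) := by
      intro xs
      rw [← coe_min' (hI.image _), WithTop.untopD_coe, min'_image_eq_inf']
    simp_rw [h]
    exact Finset.measurable_fun_inf' hI fun o _ => measurable_idxVal o
  · simp [not_nonempty_iff_eq_empty.1 hI]

def memPotential (S : Finset ℝ) : ℝ := ∑ y ∈ S, (1 + y)

def potentialGain (m x : ℝ) : ℝ := if m < x then x - m else 1 + x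

lemma measurable_potentialGain : Measurable fun p : ℝ × ℝ => potentialGain p.1 p.2 :=
  Measurable.ite (measurableSet_lt measurable_fst measurable_snd)
    (measurable_snd.sub measurable_fst) (measurable_const.add measurable_snd)

lemma memPotential_forgetStep {S : Finset ℝ} (hS : S.Nonempty) {x : ℝ} (hx : x ∉ S) :
    memPotential (forgetStep S x) = memPotential S + potentialGain (S.min' hS) x := by
  rw [memPotential, memPotential, sum_forgetStep hS hx, potentialGain]
  split_ifs <;> ring

lemma memPotential_forgetMem_succ {xs : ℕ → ℝ} {k : ℕ} (hx : xs k ∉ forgetMem {0} xs k) :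
    memPotential (forgetMem {0} xs (k + 1)) =
      memPotential (forgetMem {0} xs k) + potentialGain (mminProc xs k) (xs k) := by
  rw [mminProc_eq_min', ← memPotential_forgetStep _ hx]
  rfl

lemma memPotential_le_two_mul_card {S : Finset ℝ} (hS : ∀ y ∈ S, y ≤ 1) :
    memPotential S ≤ 2 * S.card := by
  calc memPotential S ≤ ∑ _y ∈ S, (2 : ℝ) := sum_le_sum fun y hy => by linarith [hS y hy]
    _ = 2 * S.card := by rw [sum_const, nsmul_eq_mul, mul_comm]

lemma abs_memPotential_le {S : Finset ℝ} (hS : ∀ y ∈ S, y ∈ Set.Icc (0 : ℝ) 1) :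
    |memPotential S| ≤ 2 * S.card := by
  rw [abs_of_nonneg (sum_nonneg fun y hy => by linarith [(hS y hy).1])]
  exact memPotential_le_two_mul_card fun y hy => (hS y hy).2

lemma integral_potentialGain {m : ℝ} (hm : m ∈ Set.Icc (0 : ℝ) 1) :
    ∫ x in Set.Icc (0 : ℝ) 1, potentialGain m x = 1 / 2 + m ^ 2 := by
  have below : Set.EqOn (potentialGain m) (fun x => 1 + x) (Set.uIoc 0 m) := fun x hx =>
    if_neg (not_lt.2 (Set.uIoc_of_le hm.1 ▸ hx).2)
  have above : Set.EqOn (potentialGain m) (fun x => x - m) (Set.uIoc m 1) := fun x hx =>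
    if_pos (Set.uIoc_of_le hm.2 ▸ hx).1
  rw [integral_Icc_eq_integral_Ioc, ← intervalIntegral.integral_of_le zero_le_one,
    ← intervalIntegral.integral_add_adjacent_intervals
      ((intervalIntegrable_congr below).2
        ((continuous_const.add continuous_id).intervalIntegrable _ _))
      ((intervalIntegrable_congr above).2
        ((continuous_id.sub continuous_const).intervalIntegrable _ _)),
    intervalIntegral.integral_congr_ae (ae_of_all _ fun x hx => below hx),
    intervalIntegral.integral_congr_ae (ae_of_all _ fun x hx => above hx)]
  rw [intervalIntegral.integral_comp_add_left (fun x => x),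
    intervalIntegral.integral_comp_sub_right (fun x => x), integral_id, integral_id]
  ring

namespace ProbabilityTheory

section Independence

variable {Ω β γ : Type*} [MeasurableSpace Ω] [MeasurableSpace β] [MeasurableSpace γ]
  {μ : Measure Ω} [IsFiniteMeasure μ] {Y : Ω → β} {Z : Ω → γ} {φ : β × γ → ℝ}

lemma IndepFun.integrable_prod_map (hYZ : IndepFun Y Z μ) (hY : Measurable Y) (hZ : Measurable Z)
    (hφ : Measurable φ) (hint : Integrable (fun ω => φ (Y ω, Z ω)) μ) :
    Integrable φ ((μ.map Y).prod (μ.map Z)) := by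
  rw [← hYZ.map_prod_eq_prod_map_map hY.aemeasurable hZ.aemeasurable]
  exact (integrable_map_measure hφ.aestronglyMeasurable (hY.prodMk hZ).aemeasurable).2 hint

lemma IndepFun.integral_comp_eq_integral_integral (hYZ : IndepFun Y Z μ) (hY : Measurable Y)
    (hZ : Measurable Z) (hφ : Measurable φ) (hint : Integrable (fun ω => φ (Y ω, Z ω)) μ) :
    ∫ ω, φ (Y ω, Z ω) ∂μ = ∫ y, ∫ z, φ (y, z) ∂(μ.map Z) ∂(μ.map Y) := by
  rw [← integral_prod φ (hYZ.integrable_prod_map hY hZ hφ hint),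
    ← hYZ.map_prod_eq_prod_map_map hY.aemeasurable hZ.aemeasurable,
    integral_map (hY.prodMk hZ).aemeasurable hφ.aestronglyMeasurable]

end Independence

end ProbabilityTheory

namespace IsUnifIID

variable {Ω : Type*} [MeasurableSpace Ω] {μ : Measure Ω} {X : ℕ → Ω → ℝ}

lemma ae_mem_Icc (hX : IsUnifIID μ X) : ∀ᵐ ω ∂μ, ∀ i, X i ω ∈ Set.Icc (0 : ℝ) 1 :=
  ae_all_iff.2 fun i => ae_of_ae_map (hX.1 i).aemeasurable <| by
    rw [hX.2.2 i]
    exact ae_restrict_mem measurableSet_Icc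

lemma map_singleton_eq_zero (hX : IsUnifIID μ X) (i : ℕ) (c : ℝ) : μ.map (X i) {c} = 0 := by
  rw [hX.2.2 i, Measure.restrict_apply (measurableSet_singleton c)]
  exact measure_mono_null Set.inter_subset_left Real.volume_singleton

lemma ae_ne_const (hX : IsUnifIID μ X) (i : ℕ) (c : ℝ) : ∀ᵐ ω ∂μ, X i ω ≠ c := by
  have h := hX.map_singleton_eq_zero i c
  rw [Measure.map_apply (hX.1 i) (measurableSet_singleton c)] at h
  exact measure_mono_null (fun ω hω => by simpa using hω) h

lemma measurable_mminProc_comp (hX : IsUnifIID μ X) (k : ℕ) :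
    Measurable fun ω => mminProc (X · ω) k :=
  (measurable_mminProc k).comp (measurable_pi_lambda _ hX.1)

lemma indepFun_mminProc (hX : IsUnifIID μ X) (k : ℕ) :
    IndepFun (fun ω => mminProc (X · ω) k) (X k) μ := by
  let G : (range k → ℝ) → ℝ := fun w =>
    mminProc (fun i => if h : i ∈ range k then w ⟨i, h⟩ else 0) k
  have hG : Measurable G := by
    refine (measurable_mminProc k).comp (measurable_pi_lambda _ fun i => ?_)
    by_cases h : i ∈ range k
    · simpa [h] using measurable_pi_apply (X := fun _ : range k => ℝ) ⟨i, h⟩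
    · simp [h]
  have hpast := (hX.2.1.indepFun_finset (range k) {k} (by simp) hX.1).comp hG
    (measurable_pi_apply (X := fun _ : ({k} : Finset ℕ) => ℝ) ⟨k, mem_singleton_self k⟩)
  have hG_eq : (fun ω => mminProc (X · ω) k) = G ∘ fun ω (i : range k) => X i ω := by
    funext ω
    show mminProc _ k = mminProc _ k
    rw [mminProc, mminProc, forgetMem_congr _ fun i hi => ?_]
    simp [mem_range.2 hi]
  rw [hG_eq]
  exact hpast

variable [IsProbabilityMeasure μ]

lemma ae_ne (hX : IsUnifIID μ X) {i j : ℕ} (hij : i ≠ j) :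
    ∀ᵐ ω ∂μ, X i ω ≠ X j ω := by
  have hdiag : MeasurableSet {p : ℝ × ℝ | p.1 = p.2} :=
    measurableSet_eq_fun measurable_fst measurable_snd
  have h : μ.map (fun ω => (X i ω, X j ω)) {p | p.1 = p.2} = 0 := by
    have hslice : ∀ y : ℝ, Prod.mk y ⁻¹' {p : ℝ × ℝ | p.1 = p.2} = {y} := fun y => by
      ext; simp [eq_comm]
    rw [(hX.2.1.indepFun hij).map_prod_eq_prod_map_map (hX.1 i).aemeasurable
      (hX.1 j).aemeasurable, Measure.prod_apply hdiag]
    simp [hslice, hX.map_singleton_eq_zero j]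
  rw [Measure.map_apply ((hX.1 i).prodMk (hX.1 j)) hdiag] at h
  exact measure_mono_null (fun ω hω => by simpa using hω) h

lemma ae_notMem_forgetMem (hX : IsUnifIID μ X) (k : ℕ) :
    ∀ᵐ ω ∂μ, X k ω ∉ forgetMem {0} (X · ω) k := by
  have hpast : ∀ᵐ ω ∂μ, ∀ j ∈ range k, X j ω ≠ X k ω :=
    (Filter.eventually_all_finset _).2 fun j hj => hX.ae_ne (mem_range.1 hj).ne
  filter_upwards [hX.ae_ne_const k 0, hpast] with ω hzero hpast hmem
  rcases mem_union.1 (forgetMem_subset _ _ _ hmem) with h | h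
  · exact hzero (mem_singleton.1 h)
  · obtain ⟨j, hj, hjk⟩ := mem_image.1 h
    exact hpast j hj hjk

lemma integrable_potentialGain (hX : IsUnifIID μ X) (k : ℕ) :
    Integrable (fun ω => potentialGain (mminProc (X · ω) k) (X k ω)) μ := by
  refine .of_bound (measurable_potentialGain.comp
    ((hX.measurable_mminProc_comp k).prodMk (hX.1 k))).aestronglyMeasurable 2 ?_
  filter_upwards [hX.ae_mem_Icc] with ω hω
  have hm := mminProc_mem_Icc hω k
  have hx := hω k
  rw [Real.norm_eq_abs, abs_le, potentialGain]
  split_ifs <;> constructor <;> linarith [hm.1, hm.2, hx.1, hx.2]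

lemma integrable_card (hX : IsUnifIID μ X) (k : ℕ) :
    Integrable (fun ω => ((forgetMem {0} (X · ω) k).card : ℝ)) μ := by
  refine .of_bound ?_ (1 + k) (ae_of_all _ fun ω => ?_)
  · simp_rw [cast_card]
    exact ((measurable_sum_forgetMem measurable_const k).comp
      (measurable_pi_lambda _ hX.1)).aestronglyMeasurable
  · rw [Real.norm_natCast]
    exact_mod_cast card_forgetMem_le {0} _ k

lemma integrable_memPotential (hX : IsUnifIID μ X) (k : ℕ) :
    Integrable (fun ω => memPotential (forgetMem {0} (X · ω) k)) μ := by
  refine .of_bound ((measurable_sum_forgetMem (measurable_const.add measurable_id) k).comp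
    (measurable_pi_lambda _ hX.1)).aestronglyMeasurable (2 * (1 + k)) ?_
  filter_upwards [hX.ae_mem_Icc] with ω hω
  rw [Real.norm_eq_abs]
  refine (abs_memPotential_le (forgetMem_subset_Icc hω k)).trans ?_
  have := card_forgetMem_le {0} (X · ω) k
  gcongr
  exact_mod_cast this

lemma integral_potentialGain_ge (hX : IsUnifIID μ X) (k : ℕ) :
    1 / 2 ≤ ∫ ω, potentialGain (mminProc (X · ω) k) (X k ω) ∂μ := by
  have hm := hX.measurable_mminProc_comp k
  have hindep := hX.indepFun_mminProc k
  have hint := (hindep.integrable_prod_map hm (hX.1 k) measurable_potentialGain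
    (hX.integrable_potentialGain k)).integral_prod_left
  have hrange : ∀ᵐ y ∂(μ.map fun ω => mminProc (X · ω) k), y ∈ Set.Icc (0 : ℝ) 1 :=
    (ae_map_iff hm.aemeasurable measurableSet_Icc).2
      (hX.ae_mem_Icc.mono fun ω hω => mminProc_mem_Icc hω k)
  rw [hindep.integral_comp_eq_integral_integral hm (hX.1 k) measurable_potentialGain
    (hX.integrable_potentialGain k)]
  rw [hX.2.2 k] at hint ⊢
  have := Measure.isProbabilityMeasure_map (μ := μ) hm.aemeasurable
  calc (1 / 2 : ℝ) = ∫ _y, (1 / 2 : ℝ) ∂(μ.map fun ω => mminProc (X · ω) k) := by simp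
    _ ≤ _ := integral_mono_ae (integrable_const _) hint <| hrange.mono fun y hy => by
      simp only
      rw [integral_potentialGain hy]
      nlinarith

lemma integral_memPotential_ge (hX : IsUnifIID μ X) :
    ∀ k : ℕ, 1 + (k : ℝ) / 2 ≤ ∫ ω, memPotential (forgetMem {0} (X · ω) k) ∂μ
  | 0 => by simp [memPotential, forgetMem]
  | k + 1 => by
    have hstep : (fun ω => memPotential (forgetMem {0} (X · ω) (k + 1))) =ᵐ[μ]
        fun ω => memPotential (forgetMem {0} (X · ω) k) +
          potentialGain (mminProc (X · ω) k) (X k ω) :=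
      (hX.ae_notMem_forgetMem k).mono fun ω h => memPotential_forgetMem_succ h
    rw [integral_congr_ae hstep,
      integral_add (hX.integrable_memPotential k) (hX.integrable_potentialGain k)]
    have := integral_memPotential_ge hX k
    have := hX.integral_potentialGain_ge k
    push_cast
    linarith

end IsUnifIID

end

/-- In the forgetting process starting from `S = {0}` with `n` i.i.d.
uniform `[0,1]` insertions, the expected size of the memory after `n` steps is at least
`(n+1)/4`. -/
theorem expected_memory_size_ge {Ω : Type*} [MeasurableSpace Ω] (μ : Measure Ω)
    [IsProbabilityMeasure μ] (X : ℕ → Ω → ℝ) (hX : IsUnifIID μ X) (n : ℕ) :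
    ((n : ℝ) + 1) / 4 ≤ ∫ ω, ((forgetMem {0} (fun i => X i ω) n).card : ℝ) ∂μ := by
  have hbound : ∀ᵐ ω ∂μ, memPotential (forgetMem {0} (fun i => X i ω) n) ≤
      2 * ((forgetMem {0} (fun i => X i ω) n).card : ℝ) :=
    hX.ae_mem_Icc.mono fun ω hω =>
      memPotential_le_two_mul_card fun y hy => (forgetMem_subset_Icc hω n y hy).2
  have hmono := integral_mono_ae (hX.integrable_memPotential n)
    ((hX.integrable_card n).const_mul 2) hbound
  rw [integral_const_mul] at hmono
  linarith [hX.integral_memPotential_ge n]
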